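/- arXiv:2602.24279 — 7 statements merged into one kernel-verified Lean document; each statement's English description precedes it below -/
import Mathlib

section
/- If C and C' are distinct h×h Boolean matrices, then the properties P(C) and P(C') are separated by one-way liveness OWL_h: for every string x with connectivity C and every string z with connectivity C', there exist strings u, v over Σ_h such that exactly one of uxv and uzv is live. -/
/-- Connectivity of a string over Σ_h. -/
def Conn {h : ℕ} : List (Set (Fin h × Fin h)) → Fin h → Fin h → Prop
  | [], i, j => i = j
  | a :: z, i, j => ∃ k, (i, k) ∈ a ∧ Conn z k j

/-- A string is live iff some leftmost node connects to some rightmost node. -/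
def Live {h : ℕ} (z : List (Set (Fin h × Fin h))) : Prop := ∃ i j : Fin h, Conn z i j

theorem Conn_append {h : ℕ} (s t : List (Set (Fin h × Fin h))) (i j : Fin h) :
    Conn (s ++ t) i j ↔ ∃ k, Conn s i k ∧ Conn t k j := by
  induction s generalizing i with
  | nil => simp [Conn]
  | cons a s ih =>
    simp only [List.cons_append, Conn]
    constructor
    · rintro ⟨k, hk, hc⟩
      obtain ⟨m, h1, h2⟩ := (ih k).mp hc
      exact ⟨m, ⟨k, hk, h1⟩, h2⟩
    · rintro ⟨m, ⟨k, hk, h1⟩, h2⟩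
      exact ⟨k, hk, (ih k).mpr ⟨m, h1, h2⟩⟩

/-- Distinct connectivities define properties separated by one-way liveness:
for any `x` with connectivity `C` and `z` with connectivity `C'`, there is a context
`u, v` such that exactly one of `uxv`, `uzv` is live. -/
theorem distinct_connectivities_separated_by_owl (h : ℕ)
    (C C' : Fin h → Fin h → Prop) (hne : C ≠ C')
    (x z : List (Set (Fin h × Fin h)))
    (hx : ∀ i j, Conn x i j ↔ C i j) (hz : ∀ i j, Conn z i j ↔ C' i j) :
    ∃ u v : List (Set (Fin h × Fin h)),
      (Live (u ++ x ++ v) ↔ ¬ Live (u ++ z ++ v)) := by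
  -- h > 0, else C = C' by funext on empty type
  obtain ⟨i, j, hij⟩ : ∃ i j, ¬ (C i j ↔ C' i j) := by
    by_contra hc
    push_neg at hc
    exact hne (funext fun i => funext fun j => propext (hc i j))
  set u : List (Set (Fin h × Fin h)) := [{p | p.2 = i}]
  set v : List (Set (Fin h × Fin h)) := [{p | p.1 = j}]
  have key : ∀ w : List (Set (Fin h × Fin h)), Live (u ++ w ++ v) ↔ Conn w i j := by
    intro w
    constructor
    · rintro ⟨a, b, k, hk, hcw⟩
      simp only [Set.mem_setOf_eq] at hk
      rw [hk] at hcw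
      obtain ⟨m, hm, hmb⟩ := Conn_append w v i b |>.mp hcw
      obtain ⟨l, hl, hlb⟩ := hmb
      simp only [Set.mem_setOf_eq] at hl
      rw [hl] at hm
      exact hm
    · intro hw
      refine ⟨i, j, i, rfl, ?_⟩
      exact (Conn_append w v i j).mpr ⟨j, hw, j, rfl, rfl⟩
  refine ⟨u, v, ?_⟩
  rw [key x, key z, hx, hz]
  tauto
end

section
/- Let I be the h×h identity matrix and J the h×h Boolean matrix with 1s in all of the first row and 0 elsewhere. Then P(I) has suffix of choice into P(I+J): for every v with connectivity I there exists u such that for every x with connectivity I or I+J, the string xuv has connectivity I+J. -/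
/-- Connectivity equal to the identity matrix I. -/
def HasConnI {h : ℕ} (z : List (Set (Fin h × Fin h))) : Prop :=
  ∀ a b : Fin h, Conn z a b ↔ a = b

/-- Connectivity equal to I + J, where J has 1s in all of the first row and 0 elsewhere. -/
def HasConnIJ {h : ℕ} (hh : 0 < h) (z : List (Set (Fin h × Fin h))) : Prop :=
  ∀ a b : Fin h, Conn z a b ↔ (a = b ∨ a = ⟨0, hh⟩)


theorem conn_append {h : ℕ} (x y : List (Set (Fin h × Fin h))) (i j : Fin h) :
    Conn (x ++ y) i j ↔ ∃ k, Conn x i k ∧ Conn y k j := by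
  induction x generalizing i with
  | nil =>
      simp [Conn]
  | cons a z ih =>
      simp only [List.cons_append, Conn, List.append_eq, ih]
      constructor
      · rintro ⟨k, hk, l, h1, h2⟩; exact ⟨l, ⟨k, hk, h1⟩, h2⟩
      · rintro ⟨l, ⟨k, hk, h1⟩, h2⟩; exact ⟨k, hk, l, h1, h2⟩

/-- `P(I)` has suffix of choice into `P(I+J)`: for every `v` with connectivity `I`
there is `u` such that every `x` with connectivity `I` or `I+J` has `xuv` of
connectivity `I+J`. -/
theorem PI_has_suffix_of_choice_into_PIJ (h : ℕ) (hh : 0 < h)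
    (hne : ∃ w : List (Set (Fin h × Fin h)), HasConnIJ hh w)
    (v : List (Set (Fin h × Fin h))) (hv : HasConnI v) :
    ∃ u : List (Set (Fin h × Fin h)),
      ∀ x : List (Set (Fin h × Fin h)),
        (HasConnI x ∨ HasConnIJ hh x) → HasConnIJ hh (x ++ u ++ v) := by
  obtain ⟨w, hw⟩ := hne
  refine ⟨w, fun x hx a b => ?_⟩
  rw [List.append_assoc]
  rw [conn_append, ]
  constructor
  · rintro ⟨k, hxk, hk⟩
    rw [conn_append] at hk
    obtain ⟨l, hwl, hl⟩ := hk
    rw [hw] at hwl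
    rw [hv] at hl
    subst hl
    rcases hx with hx | hx
    · rw [hx] at hxk; subst hxk; exact hwl
    · rw [hx] at hxk
      rcases hxk with rfl | rfl
      · exact hwl
      · right; rfl
  · intro hab
    have hx' : Conn x a a := by
      rcases hx with hx | hx
      · exact (hx a a).mpr rfl
      · exact (hx a a).mpr (Or.inl rfl)
    refine ⟨a, hx', ?_⟩
    rw [conn_append]
    exact ⟨b, (hw a b).mpr hab, (hv b b).mpr rfl⟩
end

section
/- For a fixed 2DFA M, the map α_{y,z} that sends each exit state q ∈ Q_LR(y) to the state (if any) hit right by the computation of M started in state q at position |y|+1 of the string yz is a partial surjection from Q_LR(y) onto Q_LR(yz); consequently |Q_LR(y)| ≥ |Q_LR(yz)| for all strings y, z. -/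
/-- A two-way deterministic finite automaton: `step q a = (q', d)` where `d = true`
means the head moves right and `d = false` means it moves left. -/
structure TDFA (Q A : Type) where
  step : Q → A → Q × Bool
  start : Q
  accept : Q

namespace TDFA

variable {Q A : Type}

/-- One step of `M` on string `w`. A configuration is a pair (state, position),
with positions `1, …, w.length` on the symbols of `w`, position `0` meaning the
computation has fallen off the left end and `w.length + 1` off the right end. -/
def Step (M : TDFA Q A) (w : List A) (c c' : Q × ℕ) : Prop :=
  ∃ a, w[c.2 - 1]? = some a ∧ 1 ≤ c.2 ∧
    c' = ((M.step c.1 a).1, if (M.step c.1 a).2 then c.2 + 1 else c.2 - 1)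

/-- The computation of `M` on `w` started in state `p` at position `j`
hits right into state `q`. -/
def ReachesRight (M : TDFA Q A) (w : List A) (p : Q) (j : ℕ) (q : Q) : Prop :=
  Relation.ReflTransGen (M.Step w) (p, j) (q, w.length + 1)

/-- The computation of `M` on `w` started in state `p` at position `j`
hits left into state `q`. -/
def ReachesLeft (M : TDFA Q A) (w : List A) (p : Q) (j : ℕ) (q : Q) : Prop :=
  Relation.ReflTransGen (M.Step w) (p, j) (q, 0)

/-- `Q_LR(w)`: states hit right by left computations of `M` on `w`. -/
def QLR (M : TDFA Q A) (w : List A) : Set Q := {q | ∃ p, M.ReachesRight w p 1 q}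

/-- `Q_RL(w)`: states hit left by right computations of `M` on `w`. -/
def QRL (M : TDFA Q A) (w : List A) : Set Q := {q | ∃ p, M.ReachesLeft w p w.length q}

end TDFA

/-! The computation of `M` on `yz` from a position inside `y` runs on `y` until it first
crosses into `z` at position `|y| + 1`; hence every state of `Q_LR(yz)` is reached from some
state of `Q_LR(y)`, and determinism makes this correspondence a partial function. -/

theorem Set.ncard_le_ncard_of_functional_of_forall_exists {α β : Type*} {s : Set α}
    {t : Set β} (hs : s.Finite) (R : α → β → Prop) (hR : ∀ a b₁ b₂, R a b₁ → R a b₂ → b₁ = b₂)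
    (h : ∀ b ∈ t, ∃ a ∈ s, R a b) : t.ncard ≤ s.ncard := by
  choose g hg using h
  have : Finite s := hs
  rw [← Nat.card_coe_set_eq, ← Nat.card_coe_set_eq]
  refine Nat.card_le_card_of_injective (fun b : t => ⟨g b b.2, (hg b b.2).1⟩) ?_
  intro b₁ b₂ hb
  have hg₁₂ : g b₁ b₁.2 = g b₂ b₂.2 := congrArg Subtype.val hb
  exact Subtype.ext (hR _ _ _ (hg b₁ b₁.2).2 (hg₁₂ ▸ (hg b₂ b₂.2).2))

theorem Relation.ReflTransGen.eq_of_not_exists {α : Type*} {r : α → α → Prop}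
    (hr : Relator.RightUnique r) {a b c : α} (hb : ∀ x, ¬ r b x) (hc : ∀ x, ¬ r c x)
    (hab : Relation.ReflTransGen r a b) (hac : Relation.ReflTransGen r a c) : b = c := by
  rcases hab.total_of_right_unique hr hac with hbc | hcb
  · rcases hbc.cases_head with rfl | ⟨x, hbx, -⟩
    · rfl
    · exact absurd hbx (hb x)
  · rcases hcb.cases_head with rfl | ⟨x, hcx, -⟩
    · rfl
    · exact absurd hcx (hc x)

namespace TDFA

variable {Q A : Type} (M : TDFA Q A) {w y z : List A} {c c' : Q × ℕ}

theorem step_rightUnique (w : List A) : Relator.RightUnique (M.Step w) := by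
  rintro c c₁ c₂ ⟨a, ha, -, rfl⟩ ⟨b, hb, -, rfl⟩
  cases ha.symm.trans hb
  rfl

variable {M}

theorem Step.snd_le_length (h : M.Step w c c') : c.2 ≤ w.length := by
  obtain ⟨a, ha, h1, -⟩ := h
  have := (List.getElem?_eq_some_iff.mp ha).1
  omega

theorem Step.snd_le_succ (h : M.Step w c c') : c'.2 ≤ c.2 + 1 := by
  obtain ⟨a, -, -, rfl⟩ := h
  split_ifs <;> simp only <;> omega

theorem not_step_right_end (q : Q) (c : Q × ℕ) : ¬ M.Step w (q, w.length + 1) c :=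
  fun h => by simpa using h.snd_le_length

theorem step_append_iff (hc : c.2 ≤ y.length) : M.Step (y ++ z) c c' ↔ M.Step y c c' := by
  by_cases h0 : c.2 = 0
  · simp [Step, h0]
  · simp only [Step, List.getElem?_append_left (show c.2 - 1 < y.length by omega)]

theorem Step.append_right (h : M.Step y c c') : M.Step (y ++ z) c c' :=
  (step_append_iff h.snd_le_length).2 h

theorem ReachesRight.unique {p : Q} {j : ℕ} {q₁ q₂ : Q} (h₁ : M.ReachesRight w p j q₁)
    (h₂ : M.ReachesRight w p j q₂) : q₁ = q₂ :=
  congrArg Prod.fst <| Relation.ReflTransGen.eq_of_not_exists (M.step_rightUnique w)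
    (not_step_right_end q₁) (not_step_right_end q₂) h₁ h₂

theorem ReachesRight.trans_append {p q q' : Q} {j : ℕ} (h : M.ReachesRight y p j q)
    (h' : M.ReachesRight (y ++ z) q (y.length + 1) q') : M.ReachesRight (y ++ z) p j q' :=
  (Relation.ReflTransGen.mono (fun _ _ => Step.append_right) _ _ h).trans h'

theorem exists_reachesRight_of_reachesRight_append {q' : Q}
    (h : Relation.ReflTransGen (M.Step (y ++ z)) c (q', (y ++ z).length + 1))
    (hc : c.2 ≤ y.length + 1) :
    ∃ q, M.ReachesRight y c.1 c.2 q ∧ M.ReachesRight (y ++ z) q (y.length + 1) q' := by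
  induction h using Relation.ReflTransGen.head_induction_on with
  | refl =>
    obtain rfl : z = [] := by simpa using hc
    exact ⟨q', by simp [ReachesRight, Relation.ReflTransGen.refl],
      by simp [ReachesRight, Relation.ReflTransGen.refl]⟩
  | @head c c' hstep hrest ih =>
    rcases hc.eq_or_lt with hend | hlt
    · exact ⟨c.1, by rw [ReachesRight, ← hend],
        by rw [ReachesRight, ← hend]; exact .head hstep hrest⟩
    · obtain ⟨q, hq, hq'⟩ := ih (by have := hstep.snd_le_succ; omega)
      exact ⟨q, .head ((step_append_iff (by omega)).1 hstep) hq, hq'⟩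

theorem exists_mem_qLR_reachesRight_of_mem_qLR_append {q' : Q} (h : q' ∈ M.QLR (y ++ z)) :
    ∃ q ∈ M.QLR y, M.ReachesRight (y ++ z) q (y.length + 1) q' := by
  obtain ⟨p, hp⟩ := h
  obtain ⟨q, hq, hq'⟩ := exists_reachesRight_of_reachesRight_append hp (by omega)
  exact ⟨q, ⟨p, hq⟩, hq'⟩

end TDFA

/-- The map `α_{y,z}` (sending `q ∈ Q_LR(y)` to the state hit right by the computation
of `M` on `yz` started in `q` at position `|y|+1`) is a partial function on `Q_LR(y)`,
maps into `Q_LR(yz)`, is surjective onto `Q_LR(yz)`; hence `|Q_LR(y)| ≥ |Q_LR(yz)|`. -/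
theorem alpha_partial_surjection {Q A : Type} [Fintype Q] (M : TDFA Q A) (y z : List A) :
    (∀ q ∈ M.QLR y, ∀ q1 q2 : Q,
        M.ReachesRight (y ++ z) q (y.length + 1) q1 →
        M.ReachesRight (y ++ z) q (y.length + 1) q2 → q1 = q2) ∧
    (∀ q ∈ M.QLR y, ∀ q' : Q,
        M.ReachesRight (y ++ z) q (y.length + 1) q' → q' ∈ M.QLR (y ++ z)) ∧
    (∀ q' ∈ M.QLR (y ++ z), ∃ q ∈ M.QLR y,
        M.ReachesRight (y ++ z) q (y.length + 1) q') ∧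
    (M.QLR (y ++ z)).ncard ≤ (M.QLR y).ncard := by
  have surj : ∀ q' ∈ M.QLR (y ++ z), ∃ q ∈ M.QLR y,
      M.ReachesRight (y ++ z) q (y.length + 1) q' :=
    fun _ => TDFA.exists_mem_qLR_reachesRight_of_mem_qLR_append
  refine ⟨fun _ _ _ _ => TDFA.ReachesRight.unique, ?_, surj, ?_⟩
  · rintro q ⟨p, hp⟩ q' hq'
    exact ⟨p, hp.trans_append hq'⟩
  · exact Set.ncard_le_ncard_of_functional_of_forall_exists (Set.toFinite _)
      (fun q q' => M.ReachesRight (y ++ z) q (y.length + 1) q')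
      (fun _ _ _ => TDFA.ReachesRight.unique) surj
end

section
/- If x and z are both LR-generic strings for a nonempty smooth property P with respect to a 2DFA M, then |Q_LR(x)| = |Q_LR(z)|. -/
/-- `P` is smooth: any two of its strings admit a connecting infix in `P`. -/
def SmoothProp {A : Type} (P : Set (List A)) : Prop :=
  ∀ x ∈ P, ∀ z ∈ P, ∃ y : List A, x ++ y ++ z ∈ P

/-- `y` is LR-generic for `P`. -/
def LRGeneric {Q A : Type} (M : TDFA Q A) (P : Set (List A)) (y : List A) : Prop :=
  y ∈ P ∧ ∀ z : List A, y ++ z ∈ P → (M.QLR y).ncard = (M.QLR (y ++ z)).ncard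

/-- `y` is RL-generic for `P`. -/
def RLGeneric {Q A : Type} (M : TDFA Q A) (P : Set (List A)) (y : List A) : Prop :=
  y ∈ P ∧ ∀ z : List A, z ++ y ∈ P → (M.QRL y).ncard = (M.QRL (z ++ y)).ncard

namespace TDFA

variable {Q A : Type}

theorem Step.snd_eq_succ_or_pred {M : TDFA Q A} {w : List A} {c c' : Q × ℕ}
    (h : M.Step w c c') : c'.2 = c.2 + 1 ∨ c'.2 + 1 = c.2 := by
  obtain ⟨a, -, hc, rfl⟩ := h
  split_ifs <;> omega

theorem Step.of_append_left {M : TDFA Q A} {u v : List A} {c c' : Q × ℕ}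
    (h : M.Step (u ++ v) c c') (hc : u.length < c.2) :
    M.Step v (c.1, c.2 - u.length) (c'.1, c'.2 - u.length) := by
  obtain ⟨a, ha, -, rfl⟩ := h
  refine ⟨a, ?_, by omega, ?_⟩
  · rwa [show c.2 - u.length - 1 = (c.2 - 1) - u.length by omega,
      ← List.getElem?_append_right (by omega)]
  · split_ifs <;> simp only [Prod.mk.injEq, true_and] <;> omega

/-- A computation on `u ++ v` that exits right either starts inside `v` and runs inside `v`
throughout, or crosses from `u` into `v` for a last time, after which it is a left
computation of `v`. -/
theorem reflTransGen_step_append_of_exit_right (M : TDFA Q A) (u v : List A) {q : Q}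
    {c : Q × ℕ} (h : Relation.ReflTransGen (M.Step (u ++ v)) c (q, (u ++ v).length + 1)) :
    q ∈ M.QLR v ∨
      u.length < c.2 ∧ Relation.ReflTransGen (M.Step v) (c.1, c.2 - u.length) (q, v.length + 1) := by
  induction h using Relation.ReflTransGen.head_induction_on with
  | refl =>
    refine .inr ⟨by simp, ?_⟩
    rw [show (u ++ v).length + 1 - u.length = v.length + 1 by simp; omega]
  | @head c b hcb _ ih =>
    rcases ih with hq | ⟨hb, hbv⟩
    · exact .inl hq
    by_cases hc : u.length < c.2
    · exact .inr ⟨hc, .head (hcb.of_append_left hc) hbv⟩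
    · have hb1 : b.2 - u.length = 1 := by
        rcases hcb.snd_eq_succ_or_pred with h | h <;> omega
      exact .inl ⟨b.1, hb1 ▸ hbv⟩

theorem QLR_append_subset (M : TDFA Q A) (u v : List A) : M.QLR (u ++ v) ⊆ M.QLR v := by
  rintro q ⟨p, hp⟩
  rcases M.reflTransGen_step_append_of_exit_right u v hp with hq | ⟨hu, hpv⟩
  · exact hq
  · exact ⟨p, by simpa [ReachesRight, show u.length = 0 by simpa using hu] using hpv⟩

theorem ncard_QLR_append_le [Finite Q] (M : TDFA Q A) (u v : List A) :
    (M.QLR (u ++ v)).ncard ≤ (M.QLR v).ncard :=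
  Set.ncard_le_ncard (M.QLR_append_subset u v)

end TDFA

theorem LRGeneric.ncard_QLR_le {Q A : Type} [Finite Q] {M : TDFA Q A} {P : Set (List A)}
    {x : List A} (hx : LRGeneric M P x) {y z : List A} (hxyz : x ++ y ++ z ∈ P) :
    (M.QLR x).ncard ≤ (M.QLR z).ncard :=
  calc (M.QLR x).ncard = (M.QLR (x ++ (y ++ z))).ncard := hx.2 _ (by simpa using hxyz)
    _ = (M.QLR (x ++ y ++ z)).ncard := by rw [List.append_assoc]
    _ ≤ (M.QLR z).ncard := M.ncard_QLR_append_le _ z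

theorem LRGeneric_same_size_general {Q A : Type} [Fintype Q] (M : TDFA Q A)
    (P : Set (List A)) (hsm : SmoothProp P) (x z : List A)
    (hx : LRGeneric M P x) (hz : LRGeneric M P z) :
    (M.QLR x).ncard = (M.QLR z).ncard := by
  obtain ⟨y, hxyz⟩ := hsm x hx.1 z hz.1
  obtain ⟨y', hzyx⟩ := hsm z hz.1 x hx.1
  exact le_antisymm (hx.ncard_QLR_le hxyz) (hz.ncard_QLR_le hzyx)

/-- Any two LR-generic strings of a smooth property have the same LR-size. -/
theorem LRGeneric_same_size {Q A : Type} [Fintype Q] (M : TDFA Q A)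
    (P : Set (List A)) (hP : P.Nonempty) (hsm : SmoothProp P) (x z : List A)
    (hx : LRGeneric M P x) (hz : LRGeneric M P z) :
    (M.QLR x).ncard = (M.QLR z).ncard :=
  LRGeneric_same_size_general M P hsm x z hx hz
end

section
/- Fix 1 ≤ t ≤ U where U = C(h,2), and let (i,j) be the t-th cell of the strict upper triangle in the prescribed order. With E'_t = e_i r_j (where e_i is the column indicator of i and r_j is the row vector with 1s in cells j,…,h), and C_{t−1} the corresponding connectivity matrix, the following hold over Boolean matrices: (E'_t)^2 = 0, C_{t−1}E'_t = E'_t, and E'_t C_{t−1} = E'_t. -/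
/-- Boolean matrix product (addition is ∨, multiplication is ∧). -/
def bmul {h : ℕ} (A B : Matrix (Fin h) (Fin h) Bool) : Matrix (Fin h) (Fin h) Bool :=
  fun i j => decide (∃ k : Fin h, A i k = true ∧ B k j = true)

/-- `U = C(h,2)`, the number of cells in the strict upper triangle. -/
def Utri (h : ℕ) : ℕ := h * (h - 1) / 2

/-- `N = C(h+1,2)`, the total number of stages. -/
def Ntri (h : ℕ) : ℕ := h * (h + 1) / 2

/-- The rank of cell `(i,j)` (1-indexed, `i < j`) in the enumeration of the strict
upper triangle, going from column `h` down to column `2`, bottom to top in each column. -/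
def cellRank (h i j : ℕ) : ℕ := (h - 1 + j) * (h - j) / 2 + (j - i)

/-- The connectivity matrix `C_t` of the three-stage construction
(1-indexed cells `(i.val+1, j.val+1)`). -/
def Cmat (h t : ℕ) : Matrix (Fin h) (Fin h) Bool :=
  fun i j =>
    if t = Ntri h then false
    else if t ≤ Utri h then
      decide ((i : ℕ) = j ∨ ((i : ℕ) < j ∧ cellRank h (i.val + 1) (j.val + 1) ≤ t))
    else decide ((i : ℕ) ≤ j ∨ h - (t - Utri h) ≤ j.val + 1)

/-- `E'_t = e_i r_j`: 1s exactly in the cells `(i, j), (i, j+1), …, (i, h)`. -/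
def Emat {h : ℕ} (i j : Fin h) : Matrix (Fin h) (Fin h) Bool :=
  fun a b => decide (a = i ∧ (j : ℕ) ≤ b)

/-- `D'_t = 𝟙 r_j`: 1s exactly in columns `j, …, h` (1-indexed column `jt`). -/
def Dmat (h jt : ℕ) : Matrix (Fin h) (Fin h) Bool :=
  fun _ b => decide (jt ≤ b.val + 1)


def base (h j : ℕ) : ℕ := (h - 1 + j) * (h - j) / 2

lemma base_step (h j : ℕ) (h2 : j < h) :
    base h j = base h (j+1) + j := by
  unfold base
  obtain ⟨m, rfl⟩ : ∃ m, h = j + 1 + m := ⟨h - (j+1), by omega⟩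
  have e1 : (j + 1 + m - 1 + j) = 2*j + m := by omega
  have e2 : (j + 1 + m - j) = m + 1 := by omega
  have e3 : (j + 1 + m - 1 + (j+1)) = 2*j + m + 1 := by omega
  have e4 : (j + 1 + m - (j+1)) = m := by omega
  rw [e1, e2, e3, e4]
  have key : (2*j+m)*(m+1) = (2*j+m+1)*m + 2*j := by ring
  rw [key]
  have hev : ((2*j+m+1)*m) % 2 = 0 := by
    have : Even ((2*j+m+1)*m) := by
      rcases Nat.even_or_odd m with hm | hm
      · exact hm.mul_left _
      · refine Even.mul_right ?_ m
        rw [Nat.even_iff]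
        rw [Nat.odd_iff] at hm
        omega
    rwa [Nat.even_iff] at this
  omega

lemma base_anti (h c d : ℕ) (hcd : c ≤ d) (hd : d ≤ h) : base h d ≤ base h c := by
  induction d with
  | zero => have : c = 0 := by omega
            subst this; exact le_refl _
  | succ n ih =>
    rcases Nat.eq_or_lt_of_le hcd with rfl | hlt
    · exact le_refl _
    · have h1 : base h n = base h (n+1) + n := base_step h n (by omega)
      have h2 := ih (by omega) (by omega)
      omega

lemma base_gap (h c d : ℕ) (hcd : c < d) (hd : d ≤ h) : base h d + d ≤ base h c + 1 := by
  have h1 : base h (d-1) = base h d + (d-1) := by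
    have := base_step h (d-1) (by omega)
    have : d - 1 + 1 = d := by omega
    simpa [this] using base_step h (d-1) (by omega)
  have h2 : base h (d-1) ≤ base h c := base_anti h c (d-1) (by omega) (by omega)
  omega

lemma utri_add (h : ℕ) : Utri h + h = Ntri h := by
  unfold Utri Ntri
  rcases Nat.eq_zero_or_pos h with rfl | hp
  · simp
  obtain ⟨m, rfl⟩ : ∃ m, h = m + 1 := ⟨h - 1, by omega⟩
  have key : (m+1)*(m+1+1) = (m+1)*(m+1-1) + 2*(m+1) := by
    simp only [Nat.add_sub_cancel]; ring
  rw [key]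
  have hev : ((m+1)*m) % 2 = 0 := by
    have : Even ((m+1)*m) := by
      rcases Nat.even_or_odd m with hm | hm
      · exact hm.mul_left _
      · refine Even.mul_right ?_ m
        rw [Nat.even_iff]; rw [Nat.odd_iff] at hm; omega
    rwa [Nat.even_iff] at this
  simp only [Nat.add_sub_cancel]
  omega

lemma cellRank_eq (h i j : ℕ) : cellRank h i j = base h j + (j - i) := rfl

/-- For the `t`-th cell `(i,j)` of stage 1 (so `i < j` and its rank is `t`):
`(E'_t)² = 0`, `C_{t−1} E'_t = E'_t`, and `E'_t C_{t−1} = E'_t`. -/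
theorem Emat_facts (h t : ℕ) (ht1 : 1 ≤ t) (ht2 : t ≤ Utri h)
    (i j : Fin h) (hij : (i : ℕ) < j)
    (hrank : cellRank h (i.val + 1) (j.val + 1) = t) :
    bmul (Emat i j) (Emat i j) = (fun _ _ => false) ∧
    bmul (Cmat h (t - 1)) (Emat i j) = Emat i j ∧
    bmul (Emat i j) (Cmat h (t - 1)) = Emat i j := by
  have hh : 1 ≤ h := i.pos
  have hUN := utri_add h
  have hNt : ¬ (t - 1 = Ntri h) := by omega
  have hCt : ∀ a b : Fin h, Cmat h (t-1) a b =
      decide ((a : ℕ) = b ∨ ((a:ℕ) < b ∧ cellRank h (a.val+1) (b.val+1) ≤ t-1)) := by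
    intro a b
    unfold Cmat
    rw [if_neg hNt, if_pos (by omega)]
  -- key fact: column i of C_{t-1} is only the diagonal
  have hcol : ∀ a : Fin h, (a:ℕ) < i → ¬ (cellRank h (a.val+1) (i.val+1) ≤ t-1) := by
    intro a ha
    have hgap : base h (j.val+1) + (j.val+1) ≤ base h (i.val+1) + 1 :=
      base_gap h (i.val+1) (j.val+1) (by omega) (by omega)
    rw [cellRank_eq] at hrank ⊢
    omega
  refine ⟨?_, ?_, ?_⟩
  · funext a b
    simp only [bmul, Emat, decide_eq_true_eq]
    rw [decide_eq_false_iff_not]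
    rintro ⟨k, ⟨rfl, hk⟩, hki, hb⟩
    have : k = a := hki
    omega
  · funext a b
    simp only [bmul, Emat, decide_eq_true_eq]
    have : (∃ k : Fin h, Cmat h (t-1) a k = true ∧ k = i ∧ (j:ℕ) ≤ b) ↔
        (a = i ∧ (j:ℕ) ≤ b) := by
      constructor
      · rintro ⟨k, hC, rfl, hb⟩
        rw [hCt] at hC
        simp only [decide_eq_true_eq] at hC
        rcases hC with hC | ⟨hlt, hr⟩
        · exact ⟨Fin.ext hC, hb⟩
        · exact absurd hr (hcol a hlt)
      · rintro ⟨rfl, hb⟩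
        refine ⟨a, ?_, rfl, hb⟩
        rw [hCt]
        simp
    exact decide_eq_decide.mpr this
  · funext a b
    simp only [bmul, Emat, decide_eq_true_eq]
    have : (∃ k : Fin h, (a = i ∧ (j:ℕ) ≤ k) ∧ Cmat h (t-1) k b = true) ↔
        (a = i ∧ (j:ℕ) ≤ b) := by
      constructor
      · rintro ⟨k, ⟨rfl, hk⟩, hC⟩
        rw [hCt] at hC
        simp only [decide_eq_true_eq] at hC
        refine ⟨rfl, ?_⟩
        rcases hC with hC | ⟨hlt, _⟩ <;> omega
      · rintro ⟨rfl, hb⟩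
        refine ⟨b, ⟨rfl, hb⟩, ?_⟩
        rw [hCt]
        simp
    exact decide_eq_decide.mpr this
end

section
/- The Boolean matrices C_0, C_1, …, C_N defined by the three-stage construction are all idempotent (C_t^2 = C_t), and for every 1 ≤ t ≤ N, C_{t−1}C_t = C_t = C_t C_{t−1}. -/
/-- If `a + b` is odd then `a * b` is even. -/
lemma two_dvd_tri (a b : ℕ) (hodd : (a + b) % 2 = 1) : 2 ∣ a * b := by
  rcases Nat.even_or_odd a with ha | ha
  · exact Dvd.dvd.mul_right ha.two_dvd b
  · have hb : Even b := by
      rw [Nat.even_iff]; rw [Nat.odd_iff] at ha; omega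
    exact Dvd.dvd.mul_left hb.two_dvd a

lemma two_mul_cellRank (h i j : ℕ) (h1 : 1 ≤ j) (hj : j ≤ h) :
    2 * cellRank h i j = (h - 1 + j) * (h - j) + 2 * (j - i) := by
  unfold cellRank
  have hd : 2 ∣ (h - 1 + j) * (h - j) := two_dvd_tri _ _ (by omega)
  rw [Nat.mul_add, Nat.mul_div_cancel' hd]

/-- The cell `(i,j)` is enumerated no later than `(i,k)` when `i < k < j ≤ h`. -/
lemma rank_mono (h i k j : ℕ) (hi : 1 ≤ i) (hik : i < k) (hkj : k < j) (hjh : j ≤ h) :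
    cellRank h i j ≤ cellRank h i k := by
  have h2 : 2 * cellRank h i j ≤ 2 * cellRank h i k := by
    rw [two_mul_cellRank h i j (by omega) hjh, two_mul_cellRank h i k (by omega) (by omega)]
    zify [show 1 ≤ h by omega, hjh, show k ≤ h by omega, show i ≤ j by omega,
      show i ≤ k by omega]
    nlinarith [mul_nonneg (by linarith : (0:ℤ) ≤ (j:ℤ) - k)
      (by linarith : (0:ℤ) ≤ (j:ℤ) + k - 3)]
  omega

lemma Cmat_refl (h t : ℕ) (ht : t < Ntri h) (i : Fin h) : Cmat h t i i = true := by
  unfold Cmat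
  rw [if_neg (by omega)]
  split_ifs <;> simp

lemma Cmat_trans (h t : ℕ) {i k j : Fin h} (h1 : Cmat h t i k = true)
    (h2 : Cmat h t k j = true) : Cmat h t i j = true := by
  unfold Cmat at *
  by_cases hN : t = Ntri h
  · rw [if_pos hN] at h1; exact absurd h1 (by simp)
  · rw [if_neg hN] at *
    by_cases hU : t ≤ Utri h
    · rw [if_pos hU] at *
      simp only [decide_eq_true_eq] at *
      rcases h1 with h1 | ⟨h1a, h1b⟩
      · rcases h2 with h2 | ⟨h2a, h2b⟩
        · left; omega
        · right; refine ⟨by omega, ?_⟩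
          rw [show (i.val + 1) = (k.val + 1) by omega]; exact h2b
      · rcases h2 with h2 | ⟨h2a, h2b⟩
        · right; refine ⟨by omega, ?_⟩
          rw [show (j.val + 1) = (k.val + 1) by omega]; exact h1b
        · right; refine ⟨by omega, ?_⟩
          calc cellRank h (i.val + 1) (j.val + 1) ≤ cellRank h (i.val + 1) (k.val + 1) :=
                rank_mono h _ _ _ (by omega) (by omega) (by omega) (by omega)
            _ ≤ t := h1b
    · rw [if_neg hU] at *
      simp only [decide_eq_true_eq] at *
      omega

lemma Cmat_mono (h t : ℕ) (h1 : 1 ≤ t) (h2 : t < Ntri h) {i j : Fin h}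
    (hc : Cmat h (t - 1) i j = true) : Cmat h t i j = true := by
  unfold Cmat at *
  rw [if_neg (by omega)] at *
  by_cases hU : t ≤ Utri h
  · rw [if_pos hU, if_pos (by omega)] at *
    simp only [decide_eq_true_eq] at *
    rcases hc with hc | ⟨hca, hcb⟩
    · left; exact hc
    · right; exact ⟨hca, by omega⟩
  · rw [if_neg hU] at *
    by_cases hU' : t - 1 ≤ Utri h
    · rw [if_pos hU'] at hc
      simp only [decide_eq_true_eq] at *
      rcases hc with hc | ⟨hca, _⟩
      · left; omega
      · left; omega
    · rw [if_neg hU'] at hc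
      simp only [decide_eq_true_eq] at *
      omega

lemma bmul_true_iff {h : ℕ} (A B : Matrix (Fin h) (Fin h) Bool) (i j : Fin h) :
    bmul A B i j = true ↔ ∃ k, A i k = true ∧ B k j = true := by simp [bmul]

/-- All matrices `C_0, …, C_N` are idempotent, and the Boolean product of two
successive ones (in either order) is the later one. -/
theorem Cmat_idempotent_and_absorbing (h : ℕ) :
    (∀ t ≤ Ntri h, bmul (Cmat h t) (Cmat h t) = Cmat h t) ∧
    (∀ t, 1 ≤ t → t ≤ Ntri h →
      bmul (Cmat h (t - 1)) (Cmat h t) = Cmat h t ∧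
      bmul (Cmat h t) (Cmat h (t - 1)) = Cmat h t) := by
  constructor
  · intro t ht
    ext i j
    by_cases hN : t = Ntri h
    · subst hN; simp [bmul, Cmat]
    · have hlt : t < Ntri h := lt_of_le_of_ne ht hN
      rw [Bool.eq_iff_iff, bmul_true_iff]
      constructor
      · rintro ⟨k, hk1, hk2⟩; exact Cmat_trans h t hk1 hk2
      · intro hij; exact ⟨i, Cmat_refl h t hlt i, hij⟩
  · intro t h1t htN
    by_cases hN : t = Ntri h
    · subst hN
      constructor <;> (ext i j; simp [bmul, Cmat])
    · have hlt : t < Ntri h := lt_of_le_of_ne htN hN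
      have hlt' : t - 1 < Ntri h := by omega
      constructor <;> ext i j <;> rw [Bool.eq_iff_iff, bmul_true_iff]
      · constructor
        · rintro ⟨k, hk1, hk2⟩
          exact Cmat_trans h t (Cmat_mono h t h1t hlt hk1) hk2
        · intro hij; exact ⟨i, Cmat_refl h (t - 1) hlt' i, hij⟩
      · constructor
        · rintro ⟨k, hk1, hk2⟩
          exact Cmat_trans h t hk1 (Cmat_mono h t h1t hlt hk2)
        · intro hij; exact ⟨j, hij, Cmat_refl h (t - 1) hlt' j⟩
end

section
/- For every 1 ≤ t ≤ N, the property P_{t−1} = P(C_{t−1}) has suffix of choice into P_t = P(C_t): for every v ∈ P_{t−1} there exists u (any string with connectivity C_t) such that for all x ∈ P_{t−1} ∪ P_t, the string xuv has connectivity C_t. -/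
/-- `z` has connectivity `C_t`. -/
def HasConnC (h t : ℕ) (z : List (Set (Fin h × Fin h))) : Prop :=
  ∀ a b : Fin h, Conn z a b ↔ Cmat h t a b = true


lemma PtSoC_A_even (h m : ℕ) : (h - 1 + m) * (h - m) % 2 = 0 := by
  rw [← Nat.even_iff]
  rcases Nat.eq_zero_or_pos h with rfl | hpos
  · simp
  rcases Nat.even_or_odd (h + m) with he | ho
  · exact Nat.even_mul.mpr (Or.inr (by rw [Nat.even_iff] at *; omega))
  · exact Nat.even_mul.mpr (Or.inl (by rw [Nat.odd_iff] at ho; rw [Nat.even_iff]; omega))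

lemma PtSoC_A_step (h m : ℕ) (hm : m < h) :
    (h - 1 + m) * (h - m) = (h - 1 + (m + 1)) * (h - (m + 1)) + 2 * m := by
  obtain ⟨d, rfl⟩ : ∃ d, h = m + d + 1 := ⟨h - m - 1, by omega⟩
  have e1 : m + d + 1 - 1 + m = 2 * m + d := by omega
  have e2 : m + d + 1 - m = d + 1 := by omega
  have e3 : m + d + 1 - 1 + (m + 1) = 2 * m + d + 1 := by omega
  have e4 : m + d + 1 - (m + 1) = d := by omega
  rw [e1, e2, e3, e4]; ring

lemma PtSoC_rank_le (h i k j : ℕ) (h1 : 1 ≤ i) (h2 : i < k) (h3 : k < j) (h4 : j ≤ h) :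
    cellRank h i j ≤ cellRank h i k := by
  have key : ∀ j', k ≤ j' → j' ≤ h →
      (h - 1 + j') * (h - j') / 2 + j' ≤ (h - 1 + k) * (h - k) / 2 + k := by
    intro j'
    induction j' with
    | zero => intro hk _; omega
    | succ m ih =>
      intro hk hmh
      rcases Nat.lt_or_ge k (m + 1) with hlt | hge
      · have hkm : k ≤ m := by omega
        have hstep := PtSoC_A_step h m (by omega)
        have hev := PtSoC_A_even h (m + 1)
        have hev2 := PtSoC_A_even h m
        have ihm := ih hkm (by omega)
        have hm1 : 1 ≤ m := by omega
        omega
      · have : k = m + 1 := by omega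
        subst this
        omega
  have hg := key j (by omega) h4
  unfold cellRank
  omega

lemma PtSoC_cmat_iff (h t : ℕ) (a b : Fin h) :
    Cmat h t a b = true ↔
      (if t = Ntri h then False
       else if t ≤ Utri h then
         ((a : ℕ) = b ∨ ((a : ℕ) < b ∧ cellRank h (a.val + 1) (b.val + 1) ≤ t))
       else ((a : ℕ) ≤ b ∨ h - (t - Utri h) ≤ b.val + 1)) := by
  unfold Cmat
  split_ifs <;> simp

lemma PtSoC_refl (h t : ℕ) (ht : t < Ntri h) (a : Fin h) : Cmat h t a a = true := by
  rw [PtSoC_cmat_iff, if_neg (by omega)]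
  split_ifs <;> simp

lemma PtSoC_mono (h s t : ℕ) (hst : s ≤ t) (ht : t < Ntri h) (a b : Fin h)
    (hab : Cmat h s a b = true) : Cmat h t a b = true := by
  rw [PtSoC_cmat_iff] at hab ⊢
  rw [if_neg (by omega)] at hab ⊢
  split_ifs at hab ⊢ <;> omega

lemma PtSoC_trans (h t : ℕ) (ht : t < Ntri h) (a b c : Fin h)
    (h1 : Cmat h t a b = true) (h2 : Cmat h t b c = true) : Cmat h t a c = true := by
  rw [PtSoC_cmat_iff] at h1 h2 ⊢
  rw [if_neg (by omega)] at h1 h2 ⊢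
  split_ifs at h1 h2 ⊢ with hs
  · rcases h1 with h1 | ⟨h1a, h1b⟩
    · rw [h1]; exact h2
    rcases h2 with h2 | ⟨h2a, h2b⟩
    · rw [← h2]; right; exact ⟨h1a, h1b⟩
    right
    refine ⟨by omega, ?_⟩
    calc cellRank h (a.val + 1) (c.val + 1)
        ≤ cellRank h (a.val + 1) (b.val + 1) :=
          PtSoC_rank_le h _ _ _ (by omega) (by omega) (by omega) (by omega)
      _ ≤ t := h1b
  · omega

lemma PtSoC_conn_append {h : ℕ} (x y : List (Set (Fin h × Fin h))) (a b : Fin h) :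
    Conn (x ++ y) a b ↔ ∃ k, Conn x a k ∧ Conn y k b := by
  induction x generalizing a with
  | nil =>
    simp only [List.nil_append]
    constructor
    · intro hc; exact ⟨a, rfl, hc⟩
    · rintro ⟨k, rfl, hc⟩; exact hc
  | cons c x ih =>
    simp only [List.cons_append]
    constructor
    · rintro ⟨m, hm, hc⟩
      obtain ⟨k, hk1, hk2⟩ := (ih m).mp hc
      exact ⟨k, ⟨m, hm, hk1⟩, hk2⟩
    · rintro ⟨k, ⟨m, hm, hk1⟩, hk2⟩
      exact ⟨m, hm, (ih m).mpr ⟨k, hk1, hk2⟩⟩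

/-- `P_{t−1}` has suffix of choice into `P_t`: for every `v ∈ P(C_{t−1})` there is a
string `u` (any string of connectivity `C_t` works) such that every
`x ∈ P(C_{t−1}) ∪ P(C_t)` satisfies `xuv ∈ P(C_t)`. -/
theorem Pt_suffix_of_choice (h t : ℕ) (ht1 : 1 ≤ t) (ht2 : t ≤ Ntri h)
    (hne : ∀ s ≤ Ntri h, (setOf (HasConnC h s)).Nonempty)
    (v : List (Set (Fin h × Fin h))) (hv : HasConnC h (t - 1) v) :
    ∃ u : List (Set (Fin h × Fin h)), HasConnC h t u ∧
      ∀ x : List (Set (Fin h × Fin h)),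
        (HasConnC h (t - 1) x ∨ HasConnC h t x) → HasConnC h t (x ++ u ++ v) := by
  obtain ⟨u, hu⟩ := hne t ht2
  refine ⟨u, hu, ?_⟩
  intro x hx a b
  obtain ⟨s, hs, hxs⟩ : ∃ s, s ≤ t ∧ HasConnC h s x := by
    rcases hx with hx | hx
    · exact ⟨t - 1, by omega, hx⟩
    · exact ⟨t, le_refl t, hx⟩
  rw [PtSoC_conn_append]
  constructor
  · rintro ⟨k, hk, hc⟩
    rw [PtSoC_conn_append] at hk
    obtain ⟨m, hm1, hm2⟩ := hk
    rw [hxs] at hm1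
    rw [hu] at hm2
    rw [hv] at hc
    by_cases hN : t = Ntri h
    · rw [PtSoC_cmat_iff, if_pos hN] at hm2
      exact hm2.elim
    have htN : t < Ntri h := by omega
    exact PtSoC_trans h t htN a k b
      (PtSoC_trans h t htN a m k (PtSoC_mono h s t hs htN a m hm1) hm2)
      (PtSoC_mono h (t - 1) t (by omega) htN k b hc)
  · intro hab
    by_cases hN : t = Ntri h
    · rw [PtSoC_cmat_iff, if_pos hN] at hab
      exact hab.elim
    have htN : t < Ntri h := by omega
    refine ⟨b, ?_, (hv b b).mpr (PtSoC_refl h (t - 1) (by omega) b)⟩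
    rw [PtSoC_conn_append]
    exact ⟨a, (hxs a a).mpr (PtSoC_refl h s (by omega) a), (hu a b).mpr hab⟩
end
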